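/- Let X be a compact complex manifold of dimension n, 𝒬 a holomorphic vector bundle carrying a pseudo-Hermitian metric G, and ω a balanced Hermitian metric on X (i.e. dω^{n−1} = 0) such that the Hermitian-Einstein equation F_G ∧ ω^{n−1} = 0 holds. Then for every holomorphic endomorphism φ of 𝒬 and every d-closed (n−1,n−1)-form ν in the Bott-Chern class of ω^{n−1}, one has ∫_X tr(φ F_G) ∧ ν = 0. -/
import Mathlib


/-- Let `X` be a compact complex manifold of dimension `n`, `𝒬` a holomorphic
vector bundle with a pseudo-Hermitian metric `G` and `ω` a balanced Hermitian metric
(`dω^{n−1} = 0`) on `X` satisfying the Hermitian-Einstein equation `F_G ∧ ω^{n−1} = 0`.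
Then for every holomorphic endomorphism `φ` of `𝒬` and every `d`-closed `(n−1,n−1)`-form
`ν` in the Bott-Chern class of `ω^{n−1}` (i.e. `ν = ω^{n−1} + ∂̄∂α`), one has
`∫_X tr(φ F_G) ∧ ν = 0`.

Abstract framework: `A` = complex-valued forms with `∂`, `∂̄`, `∫`; `B` = `End 𝒬`-valued
forms with trace `tr` and the scalar-extension algebra map `ι : A → B` (wedge by scalar
forms); `ωn1` represents the balanced form `ω^{n−1}`, so `∂ωn1 = ∂̄ωn1 = 0`, and the
Hermitian-Einstein equation reads `F_G * ι(ω^{n−1}) = 0`. -/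
theorem futaki_vanishes_for_hermitian_einstein
    {A B : Type*} [Ring A] [Algebra ℂ A] [Ring B] [Algebra ℂ B]
    (del dbar : A →ₗ[ℂ] A)
    (dbarB : B →ₗ[ℂ] B)
    (tr : B →ₗ[ℂ] A)
    (ι : A →ₐ[ℂ] B)
    (integral : A →ₗ[ℂ] ℂ)
    (hStokes_del : ∀ x : A, integral (del x) = 0)
    (hStokes_dbar : ∀ x : A, integral (dbar x) = 0)
    (htr_dbar : ∀ b : B, dbar (tr b) = tr (dbarB b))
    -- the trace is A-linear against scalar forms: tr(x ∧ a) = tr(x) ∧ a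
    (htr_scalar : ∀ (x : B) (a : A), tr (x * ι a) = tr x * a)
    (φ FG : B)
    (hφ : dbarB φ = 0)
    (hBianchi : dbarB FG = 0)
    (ωn1 : A)
    -- ω is balanced: d(ω^{n−1}) = 0, hence ∂ωn1 = 0 and ∂̄ωn1 = 0 by type decomposition
    (hbal_del : del ωn1 = 0)
    (hbal_dbar : dbar ωn1 = 0)
    -- the Hermitian-Einstein equation F_G ∧ ω^{n−1} = 0
    (hHE : FG * ι ωn1 = 0)
    -- graded Leibniz rules for the even-degree elements φ and tr(φ F_G)
    (hLeibB : ∀ y : B, dbarB (φ * y) = dbarB φ * y + φ * dbarB y)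
    (hLeibA : ∀ y : A, dbar (tr (φ * FG) * y) = dbar (tr (φ * FG)) * y + tr (φ * FG) * dbar y)
    :
    ∀ α : A, integral (tr (φ * FG) * (ωn1 + dbar (del α))) = 0 := by
  intro α
  have hdtr : dbar (tr (φ * FG)) = 0 := by
    rw [htr_dbar, hLeibB, hφ, hBianchi, zero_mul, mul_zero, add_zero, map_zero]
  have h1 : tr (φ * FG) * ωn1 = 0 := by
    have := htr_scalar (φ * FG) ωn1
    rw [mul_assoc, hHE, mul_zero, map_zero] at this
    exact this.symm
  have h2 : tr (φ * FG) * dbar (del α) = dbar (tr (φ * FG) * del α) := by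
    rw [hLeibA, hdtr, zero_mul, zero_add]
  rw [mul_add, h1, zero_add, h2, hStokes_dbar]
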